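/- arXiv:0912.5303 — 3 statements merged into one kernel-verified Lean document; each statement's English description precedes it below -/
import Mathlib

section
/- Let f₀ be a probability density on a set S₀ ⊆ ℝ with distribution function F₀ (continuous), G a CDF on ℝ symmetric about 0 (G(-x) = 1 - G(x)) and continuous except possibly at 0, and w₁ an odd function on (-1/2, 1/2). Then x ↦ 2 f₀(x) G(w₁(F₀(x) - 1/2)) is a probability density on S₀. -/
/-!
Push the measure `ν = f₀ dx` forward along its distribution function `F₀ = cdf ν`. Since `ν` has
no atoms, `F₀` is continuous, and then `ν (F₀ ≤ c) = c` for `c ∈ [0, 1]`: the image of `ν` is the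
uniform distribution on `(0, 1]` (probability integral transform). The integral therefore equals
`2 ∫₀¹ G (w₁ (u - 1/2)) du`, and the reflection `u ↦ 1 - u` turns the integrand into
`1 - G (w₁ (u - 1/2))` because `w₁` is odd and `G (-x) = 1 - G x`, so the last integral is `1/2`.
-/

open MeasureTheory Set Filter Topology ProbabilityTheory

section Density

variable {α : Type*} [MeasurableSpace α] {μ : Measure α} {f : α → ℝ}

lemma isProbabilityMeasure_withDensity_ofReal (hf : Integrable f μ) (hf₀ : 0 ≤ᵐ[μ] f)
    (hf₁ : ∫ x, f x ∂μ = 1) : IsProbabilityMeasure (μ.withDensity fun x => ENNReal.ofReal (f x)) :=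
  ⟨by rw [withDensity_apply _ MeasurableSet.univ, Measure.restrict_univ,
    ← ofReal_integral_eq_lintegral_ofReal hf hf₀, hf₁, ENNReal.ofReal_one]⟩

lemma measureReal_withDensity_ofReal {s : Set α} (hs : MeasurableSet s) (hf : IntegrableOn f s μ)
    (hf₀ : 0 ≤ᵐ[μ.restrict s] f) :
    (μ.withDensity fun x => ENNReal.ofReal (f x)).real s = ∫ x in s, f x ∂μ := by
  rw [measureReal_def, withDensity_apply _ hs, ← ofReal_integral_eq_lintegral_ofReal hf hf₀,
    ENNReal.toReal_ofReal (integral_nonneg_of_ae hf₀)]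

lemma integral_withDensity_ofReal (hf : AEMeasurable f μ) (hf₀ : 0 ≤ᵐ[μ] f) (g : α → ℝ) :
    ∫ x, g x ∂(μ.withDensity fun x => ENNReal.ofReal (f x)) = ∫ x, f x * g x ∂μ := by
  rw [integral_withDensity_eq_integral_toReal_smul₀ hf.ennreal_ofReal
    (ae_of_all _ fun _ => ENNReal.ofReal_lt_top)]
  refine integral_congr_ae ?_
  filter_upwards [hf₀] with x hx
  rw [ENNReal.toReal_ofReal hx, smul_eq_mul]

end Density

lemma Monotone.preimage_Iic_eq_Iic_csSup {α β : Type*} [ConditionallyCompleteLinearOrder α]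
    [TopologicalSpace α] [OrderTopology α] [Preorder β] [TopologicalSpace β] [ClosedIicTopology β]
    {f : α → β} (hf : Monotone f) (hcont : Continuous f) {c : β}
    (hne : (f ⁻¹' Iic c).Nonempty) (hbdd : BddAbove (f ⁻¹' Iic c)) :
    f ⁻¹' Iic c = Iic (sSup (f ⁻¹' Iic c)) := by
  have hmem : sSup (f ⁻¹' Iic c) ∈ f ⁻¹' Iic c :=
    (isClosed_Iic.preimage hcont).csSup_mem hne hbdd
  ext x
  exact ⟨fun hx => le_csSup hbdd hx, fun hx => (hf hx).trans hmem⟩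

namespace ProbabilityTheory

variable {μ : Measure ℝ} [IsProbabilityMeasure μ]

lemma continuous_cdf [NullSingletonClass μ] : Continuous (cdf μ) := by
  refine continuous_iff_continuousAt.2 fun x => ?_
  have hleft : Function.leftLim (cdf μ) x = cdf μ x := by
    have h := (cdf μ).measure_singleton x
    rw [measure_cdf, measure_singleton, eq_comm, ENNReal.ofReal_eq_zero, sub_nonpos] at h
    exact le_antisymm ((monotone_cdf μ).leftLim_le le_rfl) h
  rw [(monotone_cdf μ).continuousAt_iff_leftLim_eq_rightLim, hleft, (cdf μ).rightLim_eq x]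

lemma measure_cdf_preimage_Iic [NullSingletonClass μ] {c : ℝ} (hc₀ : 0 ≤ c) (hc₁ : c < 1) :
    μ (cdf μ ⁻¹' Iic c) = ENNReal.ofReal c := by
  obtain ⟨b, hb⟩ := ((tendsto_cdf_atTop μ).eventually_const_lt hc₁).exists
  have hbdd : BddAbove (cdf μ ⁻¹' Iic c) :=
    ⟨b, fun x hx => ((monotone_cdf μ).reflect_lt (lt_of_le_of_lt hx hb)).le⟩
  rcases (cdf μ ⁻¹' Iic c).eq_empty_or_nonempty with hempty | hne
  · have hc : c ≤ 0 := ge_of_tendsto (tendsto_cdf_atBot μ) <| Eventually.of_forall fun x =>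
      (not_le.1 fun hx => hempty.subset hx).le
    rw [hempty, measure_empty, le_antisymm hc hc₀, ENNReal.ofReal_zero]
  have hs := (monotone_cdf μ).preimage_Iic_eq_Iic_csSup continuous_cdf hne hbdd
  set a := sSup (cdf μ ⁻¹' Iic c)
  have hle : cdf μ a ≤ c := show a ∈ cdf μ ⁻¹' Iic c by rw [hs]; exact self_mem_Iic
  have hge : c ≤ cdf μ a := by
    by_contra! hlt
    have hnear : ∀ᶠ y in 𝓝[>] a, cdf μ y < c ∧ a < y :=
      ((continuous_cdf.continuousAt.eventually_lt continuousAt_const hlt).filter_mono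
        nhdsWithin_le_nhds).and self_mem_nhdsWithin
    obtain ⟨y, hyc, hay⟩ := hnear.exists
    exact hay.not_ge (le_csSup hbdd hyc.le)
  rw [hs, ← ofReal_cdf, le_antisymm hle hge]

theorem map_cdf_eq_restrict_Ioc [NullSingletonClass μ] :
    μ.map (cdf μ) = volume.restrict (Ioc 0 1) := by
  have : IsProbabilityMeasure (μ.map (cdf μ)) :=
    Measure.isProbabilityMeasure_map (monotone_cdf μ).measurable.aemeasurable
  refine Measure.ext_of_Iic _ _ fun c => ?_
  rw [Measure.map_apply (monotone_cdf μ).measurable measurableSet_Iic,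
    Measure.restrict_apply measurableSet_Iic, inter_comm, Ioc_inter_Iic, Real.volume_Ioc,
    sub_zero]
  rcases lt_or_ge c 0 with hc₀ | hc₀
  · have h1 : cdf μ ⁻¹' Iic c = ∅ :=
      eq_empty_of_forall_notMem fun x hx => (hc₀.trans_le (cdf_nonneg μ x)).not_ge hx
    rw [h1, measure_empty, ENNReal.ofReal_of_nonpos (min_le_of_right_le hc₀.le)]
  rcases lt_or_ge c 1 with hc₁ | hc₁
  · rw [measure_cdf_preimage_Iic hc₀ hc₁, min_eq_right hc₁.le]
  · rw [preimage_eq_univ_iff.2 ?_, min_eq_left hc₁, measure_univ, ENNReal.ofReal_one]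
    rintro _ ⟨x, rfl⟩
    exact (cdf_le_one μ x).trans hc₁

end ProbabilityTheory

lemma intervalIntegral_eq_half_of_add_comp_one_sub {g : ℝ → ℝ}
    (hg : IntervalIntegrable g volume 0 1) (hsymm : ∀ u ∈ Ioo (0 : ℝ) 1, g u + g (1 - u) = 1) :
    ∫ u in (0 : ℝ)..1, g u = 1 / 2 := by
  have hrefl : ∫ u in (0 : ℝ)..1, g (1 - u) = ∫ u in (0 : ℝ)..1, g u := by
    rw [intervalIntegral.integral_comp_sub_left g 1]; norm_num
  have hg' : IntervalIntegrable (fun u => g (1 - u)) volume 0 1 := by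
    simpa using (hg.comp_sub_left 1).symm
  have hsum : ∫ u in (0 : ℝ)..1, (g u + g (1 - u)) = ∫ _ in (0 : ℝ)..1, (1 : ℝ) := by
    refine intervalIntegral.integral_congr_ae ?_
    filter_upwards [Measure.ae_ne volume 1] with u hu1 hu
    rw [uIoc_of_le zero_le_one] at hu
    exact hsymm u ⟨hu.1, lt_of_le_of_ne hu.2 hu1⟩
  rw [intervalIntegral.integral_add hg hg', hrefl, intervalIntegral.integral_const] at hsum
  norm_num at hsum
  linarith

lemma integral_comp_sub_half_eq_half_of_symm {G w : ℝ → ℝ} (hG_meas : Measurable G)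
    (hG_range : ∀ x, G x ∈ Icc (0 : ℝ) 1) (hG_symm : ∀ x, G (-x) = 1 - G x)
    (hw_meas : Measurable w) (hw_odd : ∀ x ∈ Ioo (-(1 : ℝ) / 2) (1 / 2), w (-x) = -w x) :
    ∫ u in (0 : ℝ)..1, G (w (u - 1 / 2)) = 1 / 2 := by
  refine intervalIntegral_eq_half_of_add_comp_one_sub ?_ fun u hu => ?_
  · refine (intervalIntegrable_const (c := (1 : ℝ))).mono_fun
      (hG_meas.comp (hw_meas.comp (measurable_sub_const _))).aestronglyMeasurable
      (ae_of_all _ fun u => ?_)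
    obtain ⟨h0, h1⟩ := hG_range (w (u - 1 / 2))
    show ‖G (w (u - 1 / 2))‖ ≤ ‖(1 : ℝ)‖
    rw [norm_one, Real.norm_eq_abs]
    exact abs_le.2 ⟨by linarith, h1⟩
  · have hu' : u - 1 / 2 ∈ Ioo (-(1 : ℝ) / 2) (1 / 2) := ⟨by linarith [hu.1], by linarith [hu.2]⟩
    rw [show 1 - u - 1 / 2 = -(u - 1 / 2) by ring, hw_odd _ hu', hG_symm]
    ring

theorem prop3_integral_transform_general
    (S₀ : Set ℝ)
    (f₀ : ℝ → ℝ) (F₀ : ℝ → ℝ) (G : ℝ → ℝ) (w₁ : ℝ → ℝ)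
    (hf₀_nonneg : ∀ x, 0 ≤ f₀ x)
    (hf₀_supp : ∀ x ∉ S₀, f₀ x = 0)
    (hf₀_int : ∫ x in S₀, f₀ x = 1)
    (hF₀ : ∀ x, F₀ x = ∫ t in Iic x, f₀ t)
    (hG_mono : Monotone G) (hG_range : ∀ x, G x ∈ Icc (0:ℝ) 1)
    (hG_symm : ∀ x, G (-x) = 1 - G x)
    (hw₁_meas : Measurable w₁)
    (hw₁_odd : ∀ x ∈ Ioo (-(1:ℝ)/2) (1/2), w₁ (-x) = -w₁ x) :
    ∫ x in S₀, 2 * f₀ x * G (w₁ (F₀ x - 1/2)) = 1 := by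
  have hf₀_total : ∫ x, f₀ x = 1 := by
    rwa [← setIntegral_eq_integral_of_forall_compl_eq_zero hf₀_supp]
  have hf₀ : Integrable f₀ := integrable_of_integral_eq_one hf₀_total
  set ν := volume.withDensity fun x => ENNReal.ofReal (f₀ x)
  have : IsProbabilityMeasure ν :=
    isProbabilityMeasure_withDensity_ofReal hf₀ (ae_of_all _ hf₀_nonneg) hf₀_total
  have hF₀_cdf : F₀ = cdf ν := funext fun x => by
    rw [cdf_eq_real, measureReal_withDensity_ofReal measurableSet_Iic hf₀.integrableOn
      (ae_of_all _ hf₀_nonneg), hF₀]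
  set g : ℝ → ℝ := fun u => G (w₁ (u - 1 / 2))
  have hg_meas : Measurable g := hG_mono.measurable.comp (hw₁_meas.comp (measurable_sub_const _))
  calc ∫ x in S₀, 2 * f₀ x * G (w₁ (F₀ x - 1/2))
      = ∫ x, f₀ x * (2 * g (cdf ν x)) := by
        rw [setIntegral_eq_integral_of_forall_compl_eq_zero fun x hx => by simp [hf₀_supp x hx],
          hF₀_cdf]
        congr 1 with x
        ring
    _ = ∫ u, 2 * g u ∂(ν.map (cdf ν)) := by
        rw [integral_map (f := fun u => 2 * g u) (monotone_cdf ν).measurable.aemeasurable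
          (measurable_const.mul hg_meas).aestronglyMeasurable,
          integral_withDensity_ofReal hf₀.aemeasurable (ae_of_all _ hf₀_nonneg)]
    _ = 2 * ∫ u in (0 : ℝ)..1, g u := by
        rw [map_cdf_eq_restrict_Ioc, integral_const_mul,
          intervalIntegral.integral_of_le zero_le_one]
    _ = 1 := by
        rw [integral_comp_sub_half_eq_half_of_symm hG_mono.measurable hG_range hG_symm hw₁_meas
          hw₁_odd]
        norm_num

/-- Proposition 3: if `f₀` is a probability density supported on `S₀ ⊆ ℝ` with
(continuous) distribution function `F₀`, `G` is a CDF symmetric about 0 and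
continuous except possibly at 0, and `w₁` is odd on `(-1/2, 1/2)`, then
`x ↦ 2 f₀(x) G(w₁(F₀(x) - 1/2))` is a probability density on `S₀`. -/
theorem prop3_integral_transform
    (S₀ : Set ℝ) (hS₀ : MeasurableSet S₀)
    (f₀ : ℝ → ℝ) (F₀ : ℝ → ℝ) (G : ℝ → ℝ) (w₁ : ℝ → ℝ)
    (hf₀_meas : Measurable f₀) (hf₀_nonneg : ∀ x, 0 ≤ f₀ x)
    (hf₀_supp : ∀ x ∉ S₀, f₀ x = 0)
    (hf₀_int : ∫ x in S₀, f₀ x = 1)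
    (hF₀ : ∀ x, F₀ x = ∫ t in Iic x, f₀ t)
    (hG_mono : Monotone G) (hG_range : ∀ x, G x ∈ Icc (0:ℝ) 1)
    (hG_symm : ∀ x, G (-x) = 1 - G x)
    (hG_cont : ∀ x ≠ (0:ℝ), ContinuousAt G x)
    (hw₁_meas : Measurable w₁)
    (hw₁_odd : ∀ x ∈ Ioo (-(1:ℝ)/2) (1/2), w₁ (-x) = -w₁ x) :
    ∫ x in S₀, 2 * f₀ x * G (w₁ (F₀ x - 1/2)) = 1 :=
  prop3_integral_transform_general S₀ f₀ F₀ G w₁ hf₀_nonneg hf₀_supp hf₀_int hF₀ hG_mono hG_range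
    hG_symm hw₁_meas hw₁_odd
end

section
/- Let Z = (Z₁, Z₂) have density f(z) = 2 φ₂(z; Ω) G(w₂(z₁, z₂)) where Ω = [[1,ρ],[ρ,1]], |ρ| < 1, w₂(z₂, z₁) = -w₂(z₁, z₂), and G is a CDF with G(-x) = 1 - G(x). Then Z^T Ω⁻¹ Z has a chi-squared distribution with 2 degrees of freedom. -/
/-!
The swap `(z₁, z₂) ↦ (z₂, z₁)` preserves Lebesgue measure, `φ₂` and the Mahalanobis form, and
negates `w₂`; since `G(w) + G(-w) = 1`, averaging the density over the swap replaces it by `φ₂`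
on every swap-invariant event, so the Mahalanobis form has the same law as under `N₂(0, Ω)`.
There, the whitening `z ↦ ((z₁ - ρ z₂)/√(1-ρ²), z₂)` turns it into `u₁² + u₂²` of a standard
normal vector, and polar coordinates followed by `x = r²` give the density `e^{-x/2}/2`.
-/

open MeasureTheory Set Real
open scoped ENNReal

theorem map_withDensity_eq_of_add_comp_eq {α β : Type*} [MeasurableSpace α] [MeasurableSpace β]
    {μ : Measure α} {R : α → α} (hR : MeasurePreserving R μ μ) {t : α → β} (ht : Measurable t)
    (htR : ∀ x, t (R x) = t x) {f g : α → ℝ≥0∞} (hf : Measurable f)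
    (hfg : ∀ x, f x + f (R x) = 2 * g x) :
    (μ.withDensity f).map t = (μ.withDensity g).map t := by
  ext A hA
  have hS : MeasurableSet (t ⁻¹' A) := ht hA
  have hRS : R ⁻¹' (t ⁻¹' A) = t ⁻¹' A := by ext x; simp [htR]
  have hfR : ∫⁻ x in t ⁻¹' A, f (R x) ∂μ = ∫⁻ x in t ⁻¹' A, f x ∂μ := by
    simpa only [hRS] using hR.setLIntegral_comp_preimage hS hf
  have htwo : 2 * ∫⁻ x in t ⁻¹' A, f x ∂μ = 2 * ∫⁻ x in t ⁻¹' A, g x ∂μ := by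
    calc 2 * ∫⁻ x in t ⁻¹' A, f x ∂μ
        = ∫⁻ x in t ⁻¹' A, f x ∂μ + ∫⁻ x in t ⁻¹' A, f (R x) ∂μ := by rw [hfR, two_mul]
      _ = ∫⁻ x in t ⁻¹' A, 2 * g x ∂μ := by
        rw [← lintegral_add_left hf]
        exact lintegral_congr hfg
      _ = 2 * ∫⁻ x in t ⁻¹' A, g x ∂μ := lintegral_const_mul' _ _ ENNReal.ofNat_ne_top
  rw [Measure.map_apply ht hA, Measure.map_apply ht hA, withDensity_apply _ hS,
    withDensity_apply _ hS]
  exact (ENNReal.mul_right_inj two_ne_zero ENNReal.ofNat_ne_top).mp htwo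

theorem map_withDensity_skewSymmetric_eq {α β : Type*} [MeasurableSpace α] [MeasurableSpace β]
    {μ : Measure α} {R : α → α} (hR : MeasurePreserving R μ μ) {t : α → β} (ht : Measurable t)
    (htR : ∀ x, t (R x) = t x) {φ w : α → ℝ} {G : ℝ → ℝ} (hφ : Measurable φ)
    (hw : Measurable w) (hG : Measurable G) (hφ_nonneg : ∀ x, 0 ≤ φ x)
    (hG_nonneg : ∀ x, 0 ≤ G x) (hφR : ∀ x, φ (R x) = φ x) (hwR : ∀ x, w (R x) = -w x)
    (hG_symm : ∀ x, G (-x) = 1 - G x) :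
    (μ.withDensity fun x => ENNReal.ofReal (2 * φ x * G (w x))).map t =
      (μ.withDensity fun x => ENNReal.ofReal (φ x)).map t := by
  refine map_withDensity_eq_of_add_comp_eq hR ht htR (by fun_prop) fun x => ?_
  have := hφ_nonneg x
  have := hG_nonneg (w x)
  have := hG_nonneg (-w x)
  rw [hφR, hwR, ← ENNReal.ofReal_add (by positivity) (by positivity), hG_symm,
    ← ENNReal.ofReal_ofNat 2, ← ENNReal.ofReal_mul zero_le_two]
  ring_nf

theorem map_withDensity_abs_det_mul_comp {E : Type*} [NormedAddCommGroup E] [NormedSpace ℝ E]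
    [FiniteDimensional ℝ E] [MeasurableSpace E] [BorelSpace E] (μ : Measure E)
    [μ.IsAddHaarMeasure] (L : E →L[ℝ] E) (hL : L.det ≠ 0) (g : E → ℝ≥0∞) :
    (μ.withDensity fun x => ENNReal.ofReal |L.det| * g (L x)).map L = μ.withDensity g := by
  have hL_bij : Function.Bijective L := (L.toContinuousLinearEquivOfDetNeZero hL).bijective
  ext B hB
  rw [Measure.map_apply L.measurable hB, withDensity_apply _ (L.measurable hB),
    withDensity_apply _ hB,
    ← lintegral_image_eq_lintegral_abs_det_fderiv_mul μ (L.measurable hB)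
      (fun x _ => L.hasFDerivAt.hasFDerivWithinAt) hL_bij.injective.injOn,
    image_preimage_eq B hL_bij.surjective]

theorem lintegral_Ioi_comp_sq (h : ℝ → ℝ≥0∞) :
    ∫⁻ r in Ioi 0, ENNReal.ofReal (2 * r) * h (r ^ 2) = ∫⁻ x in Ioi 0, h x := by
  have himage : (fun r : ℝ => r ^ 2) '' Ioi 0 = Ioi 0 := by
    ext x
    refine ⟨?_, fun hx => ⟨√x, sqrt_pos.2 hx, sq_sqrt (le_of_lt hx)⟩⟩
    rintro ⟨r, hr, rfl⟩
    exact pow_pos (mem_Ioi.mp hr) 2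
  conv_rhs => rw [← himage, lintegral_image_eq_lintegral_abs_deriv_mul measurableSet_Ioi
    (fun r _ => by simpa using (hasDerivAt_pow 2 r).hasDerivWithinAt)
    ((pow_left_strictMonoOn₀ two_ne_zero).injOn.mono Ioi_subset_Ici_self)]
  refine setLIntegral_congr_fun measurableSet_Ioi fun r hr => ?_
  rw [abs_of_pos (by simpa using hr)]

theorem lintegral_comp_sq_add_sq (h : ℝ → ℝ≥0∞) (hh : Measurable h) :
    ∫⁻ u : ℝ × ℝ, h (u.1 ^ 2 + u.2 ^ 2) = ENNReal.ofReal π * ∫⁻ x in Ioi 0, h x := by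
  calc ∫⁻ u : ℝ × ℝ, h (u.1 ^ 2 + u.2 ^ 2)
      = ∫⁻ p in polarCoord.target, ENNReal.ofReal p.1 * h (p.1 ^ 2) := by
        rw [← lintegral_comp_polarCoord_symm]
        refine setLIntegral_congr_fun polarCoord.open_target.measurableSet fun p _ => ?_
        rw [polarCoord_symm_apply, smul_eq_mul, mul_pow, mul_pow, ← mul_add, cos_sq_add_sin_sq,
          mul_one]
    _ = ∫⁻ r in Ioi 0, ∫⁻ _ in Ioo (-π) π, ENNReal.ofReal r * h (r ^ 2) := by
        rw [polarCoord_target, Measure.volume_eq_prod, ← Measure.prod_restrict,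
          lintegral_prod _ (by fun_prop)]
    _ = ∫⁻ r in Ioi 0, ENNReal.ofReal π * (ENNReal.ofReal (2 * r) * h (r ^ 2)) := by
        refine setLIntegral_congr_fun measurableSet_Ioi fun r _ => ?_
        rw [setLIntegral_const, Real.volume_Ioo, sub_neg_eq_add, ← two_mul,
          ENNReal.ofReal_mul zero_le_two, ENNReal.ofReal_mul zero_le_two]
        ring
    _ = ENNReal.ofReal π * ∫⁻ x in Ioi 0, h x := by
        rw [lintegral_const_mul _ (by fun_prop), lintegral_Ioi_comp_sq]

theorem map_withDensity_comp_sq_add_sq (g : ℝ → ℝ≥0∞) (hg : Measurable g) :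
    (volume.withDensity fun u : ℝ × ℝ => g (u.1 ^ 2 + u.2 ^ 2)).map
        (fun u => u.1 ^ 2 + u.2 ^ 2) =
      (volume.restrict (Ioi 0)).withDensity fun x => ENNReal.ofReal π * g x := by
  ext A hA
  have hq : Measurable fun u : ℝ × ℝ => u.1 ^ 2 + u.2 ^ 2 := by fun_prop
  rw [Measure.map_apply hq hA, withDensity_apply _ (hq hA), withDensity_apply _ hA,
    lintegral_const_mul _ hg, ← lintegral_indicator hA, ← lintegral_indicator (hq hA)]
  exact lintegral_comp_sq_add_sq _ (hg.indicator hA)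

noncomputable def mahalanobis (ρ : ℝ) (z : ℝ × ℝ) : ℝ :=
  (z.1 ^ 2 - 2 * ρ * z.1 * z.2 + z.2 ^ 2) / (1 - ρ ^ 2)

noncomputable def bivariateNormalPDF (ρ : ℝ) (z : ℝ × ℝ) : ℝ :=
  (2 * π * √(1 - ρ ^ 2))⁻¹ *
    exp (-(z.1 ^ 2 - 2 * ρ * z.1 * z.2 + z.2 ^ 2) / (2 * (1 - ρ ^ 2)))

theorem mahalanobis_swap (ρ : ℝ) (z : ℝ × ℝ) : mahalanobis ρ z.swap = mahalanobis ρ z := by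
  simp only [mahalanobis, Prod.fst_swap, Prod.snd_swap]
  ring

@[fun_prop]
theorem measurable_mahalanobis (ρ : ℝ) : Measurable (mahalanobis ρ) := by
  unfold mahalanobis
  fun_prop

theorem bivariateNormalPDF_swap (ρ : ℝ) (z : ℝ × ℝ) :
    bivariateNormalPDF ρ z.swap = bivariateNormalPDF ρ z := by
  simp only [bivariateNormalPDF, Prod.fst_swap, Prod.snd_swap]
  ring_nf

theorem bivariateNormalPDF_nonneg (ρ : ℝ) (z : ℝ × ℝ) : 0 ≤ bivariateNormalPDF ρ z := by
  unfold bivariateNormalPDF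
  positivity

@[fun_prop]
theorem measurable_bivariateNormalPDF (ρ : ℝ) : Measurable (bivariateNormalPDF ρ) := by
  unfold bivariateNormalPDF
  fun_prop

/-- `whitening ρ` factors `Ω⁻¹ = Mᵀ M`, so it sends `N₂(0, Ω)` to `N₂(0, I)`. -/
noncomputable def whitening (ρ : ℝ) : ℝ × ℝ →L[ℝ] ℝ × ℝ :=
  LinearMap.toContinuousLinearMap <|
    Matrix.toLin (Module.Basis.finTwoProd ℝ) (Module.Basis.finTwoProd ℝ)
      !![(√(1 - ρ ^ 2))⁻¹, -ρ * (√(1 - ρ ^ 2))⁻¹; 0, 1]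

theorem whitening_apply (ρ : ℝ) (z : ℝ × ℝ) :
    whitening ρ z = ((√(1 - ρ ^ 2))⁻¹ * (z.1 - ρ * z.2), z.2) := by
  simp [whitening, Matrix.toLin_finTwoProd_toContinuousLinearMap]
  ring

theorem det_whitening (ρ : ℝ) : (whitening ρ).det = (√(1 - ρ ^ 2))⁻¹ := by
  simp [whitening, LinearMap.det_toContinuousLinearMap, LinearMap.det_toLin,
    Matrix.det_fin_two_of]

theorem whitening_sq_add_sq {ρ : ℝ} (hρ : |ρ| < 1) (z : ℝ × ℝ) :
    (whitening ρ z).1 ^ 2 + (whitening ρ z).2 ^ 2 = mahalanobis ρ z := by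
  have hρ2 : 0 < 1 - ρ ^ 2 := sub_pos.2 ((sq_lt_one_iff_abs_lt_one ρ).2 hρ)
  rw [whitening_apply, mahalanobis, mul_pow, inv_pow, sq_sqrt hρ2.le]
  field_simp
  ring

theorem map_mahalanobis_withDensity_bivariateNormalPDF {ρ : ℝ} (hρ : |ρ| < 1) :
    (volume.withDensity fun z => ENNReal.ofReal (bivariateNormalPDF ρ z)).map (mahalanobis ρ) =
      volume.withDensity fun x =>
        ENNReal.ofReal (if 0 < x then 1 / 2 * exp (-x / 2) else 0) := by
  have hρ2 : 0 < 1 - ρ ^ 2 := sub_pos.2 ((sq_lt_one_iff_abs_lt_one ρ).2 hρ)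
  have hc : 0 < √(1 - ρ ^ 2) := sqrt_pos.2 hρ2
  set g : ℝ → ℝ≥0∞ := fun x => ENNReal.ofReal ((2 * π)⁻¹ * exp (-x / 2))
  have hdensity : (fun z => ENNReal.ofReal (bivariateNormalPDF ρ z)) = fun z =>
      ENNReal.ofReal |(whitening ρ).det| *
        g ((whitening ρ z).1 ^ 2 + (whitening ρ z).2 ^ 2) := by
    funext z
    rw [whitening_sq_add_sq hρ, det_whitening, abs_of_pos (inv_pos.2 hc),
      ← ENNReal.ofReal_mul (inv_pos.2 hc).le, bivariateNormalPDF, mahalanobis]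
    congr 1
    field_simp
  have hmahalanobis : mahalanobis ρ = (fun u : ℝ × ℝ => u.1 ^ 2 + u.2 ^ 2) ∘ whitening ρ :=
    funext fun z => (whitening_sq_add_sq hρ z).symm
  rw [hdensity, hmahalanobis, ← Measure.map_map (by fun_prop) (whitening ρ).measurable,
    map_withDensity_abs_det_mul_comp volume (whitening ρ) (by rw [det_whitening]; positivity)
      fun u => g (u.1 ^ 2 + u.2 ^ 2),
    map_withDensity_comp_sq_add_sq g (by fun_prop), ← withDensity_indicator measurableSet_Ioi]
  congr 1
  funext x
  by_cases hx : 0 < x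
  · rw [indicator_of_mem (mem_Ioi.2 hx), if_pos hx, ← ENNReal.ofReal_mul pi_pos.le]
    field_simp
  · rw [indicator_of_notMem (notMem_Ioi.2 (not_lt.1 hx)), if_neg hx, ENNReal.ofReal_zero]

theorem mahalanobis_chi_squared_general
    {Ω : Type*} [MeasurableSpace Ω] (P : Measure Ω)
    (ρ : ℝ) (hρ : |ρ| < 1)
    (φ₂ : ℝ × ℝ → ℝ)
    (hφ₂ : ∀ z : ℝ × ℝ, φ₂ z =
      (2 * π * Real.sqrt (1 - ρ ^ 2))⁻¹ *
        Real.exp (-(z.1 ^ 2 - 2 * ρ * z.1 * z.2 + z.2 ^ 2) / (2 * (1 - ρ ^ 2))))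
    (w₂ : ℝ → ℝ → ℝ) (G : ℝ → ℝ)
    (hw₂_meas : Measurable (fun p : ℝ × ℝ => w₂ p.1 p.2))
    (hw₂_anti : ∀ z₁ z₂, w₂ z₂ z₁ = -w₂ z₁ z₂)
    (hG_mono : Monotone G) (hG_range : ∀ x, G x ∈ Icc (0:ℝ) 1)
    (hG_symm : ∀ x, G (-x) = 1 - G x)
    (Z : Ω → ℝ × ℝ) (hZ : Measurable Z)
    (hZlaw : Measure.map Z P = volume.withDensity
      (fun z : ℝ × ℝ => ENNReal.ofReal (2 * φ₂ z * G (w₂ z.1 z.2)))) :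
    Measure.map (fun ω =>
        ((Z ω).1 ^ 2 - 2 * ρ * (Z ω).1 * (Z ω).2 + (Z ω).2 ^ 2) / (1 - ρ ^ 2)) P =
      volume.withDensity (fun x : ℝ =>
        ENNReal.ofReal (if 0 < x then (1 / 2) * Real.exp (-x / 2) else 0)) := by
  obtain rfl : φ₂ = bivariateNormalPDF ρ := funext hφ₂
  have hswap : MeasurePreserving (Prod.swap : ℝ × ℝ → ℝ × ℝ) volume volume := by
    rw [Measure.volume_eq_prod]
    exact Measure.measurePreserving_swap
  have hsymmetrize := map_withDensity_skewSymmetric_eq hswap (measurable_mahalanobis ρ)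
    (mahalanobis_swap ρ) (measurable_bivariateNormalPDF ρ) hw₂_meas hG_mono.measurable
    (bivariateNormalPDF_nonneg ρ) (fun x => (hG_range x).1) (bivariateNormalPDF_swap ρ)
    (fun z => hw₂_anti z.1 z.2) hG_symm
  change P.map (mahalanobis ρ ∘ Z) = _
  rw [← Measure.map_map (measurable_mahalanobis ρ) hZ, hZlaw, hsymmetrize,
    map_mahalanobis_withDensity_bivariateNormalPDF hρ]

/-- If `Z = (Z₁, Z₂)` has density `2 φ₂(z; Ω) G(w₂(z₁,z₂))` with `w₂` antisymmetric
under coordinate swap and `G(-x) = 1 - G(x)`, then the Mahalanobis distance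
`Zᵀ Ω⁻¹ Z = (Z₁² - 2ρ Z₁ Z₂ + Z₂²)/(1 - ρ²)` is chi-squared with 2 degrees of
freedom (i.e. has density `(1/2) e^{-x/2}` on `(0,∞)`). -/
theorem mahalanobis_chi_squared
    {Ω : Type*} [MeasurableSpace Ω] (P : Measure Ω) [IsProbabilityMeasure P]
    (ρ : ℝ) (hρ : |ρ| < 1)
    (φ₂ : ℝ × ℝ → ℝ)
    (hφ₂ : ∀ z : ℝ × ℝ, φ₂ z =
      (2 * π * Real.sqrt (1 - ρ ^ 2))⁻¹ *
        Real.exp (-(z.1 ^ 2 - 2 * ρ * z.1 * z.2 + z.2 ^ 2) / (2 * (1 - ρ ^ 2))))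
    (w₂ : ℝ → ℝ → ℝ) (G : ℝ → ℝ)
    (hw₂_meas : Measurable (fun p : ℝ × ℝ => w₂ p.1 p.2))
    (hw₂_anti : ∀ z₁ z₂, w₂ z₂ z₁ = -w₂ z₁ z₂)
    (hG_mono : Monotone G) (hG_range : ∀ x, G x ∈ Icc (0:ℝ) 1)
    (hG_symm : ∀ x, G (-x) = 1 - G x)
    (Z : Ω → ℝ × ℝ) (hZ : Measurable Z)
    (hZlaw : Measure.map Z P = volume.withDensity
      (fun z : ℝ × ℝ => ENNReal.ofReal (2 * φ₂ z * G (w₂ z.1 z.2)))) :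
    Measure.map (fun ω =>
        ((Z ω).1 ^ 2 - 2 * ρ * (Z ω).1 * (Z ω).2 + (Z ω).2 ^ 2) / (1 - ρ ^ 2)) P =
      volume.withDensity (fun x : ℝ =>
        ENNReal.ofReal (if 0 < x then (1 / 2) * Real.exp (-x / 2) else 0)) :=
  mahalanobis_chi_squared_general P ρ hρ φ₂ hφ₂ w₂ G hw₂_meas hw₂_anti hG_mono hG_range hG_symm Z hZ
    hZlaw
end

section
/- For any α ∈ ℝ, ∫_{ℝ²} 2 φ₂(z; I₂) Φ(α z₁ z₂) dz = 1, where φ₂(·; I₂) is the standard bivariate normal density and Φ the standard normal CDF. -/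
/-!
Reflecting the first coordinate, `z ↦ (-z₁, z₂)`, preserves Lebesgue measure and `φ₂` but flips the
sign of `α z₁ z₂`, so the integral `I` of `2 φ₂ Φ(α z₁ z₂)` equals that of `2 φ₂ Φ(-α z₁ z₂)`.
Since `Φ(t) + Φ(-t) = 1`, the two add up to `2 ∫ φ₂ = 2`, whence `I = 1`.
-/

open MeasureTheory Set Real

theorem integral_two_mul_mul_comp_eq_one_of_odd {X : Type*} [MeasurableSpace X] {μ : Measure X}
    (σ : X ≃ᵐ X) (hσ : MeasurePreserving σ μ μ)
    {f w : X → ℝ} {G : ℝ → ℝ} (hf : Integrable f μ) (hf_one : ∫ x, f x ∂μ = 1)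
    (hfσ : ∀ x, f (σ x) = f x) (hw : Measurable w) (hwσ : ∀ x, w (σ x) = -w x)
    (hG : Measurable G) (hG_nonneg : ∀ t, 0 ≤ G t) (hG_add_neg : ∀ t, G t + G (-t) = 1) :
    ∫ x, 2 * f x * G (w x) ∂μ = 1 := by
  have hG_norm : ∀ t, ‖G t‖ ≤ 1 := fun t => by
    rw [Real.norm_of_nonneg (hG_nonneg t)]
    linarith [hG_add_neg t, hG_nonneg (-t)]
  have hint : ∀ v : X → ℝ, Measurable v → Integrable (fun x => f x * G (v x)) μ := fun v hv => by
    simpa only [mul_comm] using hf.bdd_mul (f := fun x => G (v x))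
      (hG.comp hv).aestronglyMeasurable (.of_forall fun x => hG_norm (v x))
  have hreflect : ∫ x, f x * G (w x) ∂μ = ∫ x, f x * G (-w x) ∂μ := by
    rw [← hσ.integral_comp' (fun x => f x * G (w x))]
    simp only [hfσ, hwσ]
  calc ∫ x, 2 * f x * G (w x) ∂μ
      = ∫ x, f x * G (w x) ∂μ + ∫ x, f x * G (-w x) ∂μ := by
        simp only [mul_assoc, integral_const_mul, ← hreflect]; ring
    _ = ∫ x, f x ∂μ := by
        rw [← integral_add (hint w hw) (hint (fun x => -w x) hw.neg)]
        simp only [← mul_add, hG_add_neg, mul_one]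
    _ = 1 := hf_one

section EvenDensity

variable {g : ℝ → ℝ}

theorem integral_Iic_add_integral_Iic_neg_of_even (hg : Integrable g) (hg_even : ∀ t, g (-t) = g t)
    (x : ℝ) : (∫ t in Iic x, g t) + ∫ t in Iic (-x), g t = ∫ t, g t := by
  rw [← integral_comp_neg_Ioi, ← intervalIntegral.integral_Iic_add_Ioi (b := x) hg.integrableOn
    hg.integrableOn]
  simp only [hg_even]

theorem monotone_integral_Iic_of_nonneg (hg : Integrable g) (hg_nonneg : ∀ t, 0 ≤ g t) :
    Monotone fun x => ∫ t in Iic x, g t := fun _ _ hab =>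
  setIntegral_mono_set hg.integrableOn (.of_forall fun t => hg_nonneg t)
    (Iic_subset_Iic.2 hab).eventuallyLE

end EvenDensity

theorem integrable_exp_neg_sq_div_two : Integrable fun t : ℝ => exp (-t ^ 2 / 2) := by
  convert integrable_exp_neg_mul_sq (b := 1 / 2) (by norm_num) using 2 with t
  ring_nf

theorem integral_exp_neg_sq_div_two : ∫ t : ℝ, exp (-t ^ 2 / 2) = √(2 * π) := by
  calc ∫ t : ℝ, exp (-t ^ 2 / 2) = ∫ t : ℝ, exp (-(1 / 2) * t ^ 2) := by
        congr 1; funext t; ring_nf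
    _ = √(2 * π) := by rw [integral_gaussian]; ring_nf

theorem exp_neg_sq_add_sq_div_two (z : ℝ × ℝ) :
    exp (-(z.1 ^ 2 + z.2 ^ 2) / 2) = exp (-z.1 ^ 2 / 2) * exp (-z.2 ^ 2 / 2) := by
  rw [← exp_add]; ring_nf

theorem integrable_exp_neg_sq_add_sq_div_two :
    Integrable fun z : ℝ × ℝ => exp (-(z.1 ^ 2 + z.2 ^ 2) / 2) := by
  rw [Measure.volume_eq_prod]
  simpa only [exp_neg_sq_add_sq_div_two] using
    integrable_exp_neg_sq_div_two.mul_prod integrable_exp_neg_sq_div_two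

theorem integral_exp_neg_sq_add_sq_div_two :
    ∫ z : ℝ × ℝ, exp (-(z.1 ^ 2 + z.2 ^ 2) / 2) = 2 * π := by
  simp only [exp_neg_sq_add_sq_div_two]
  rw [Measure.volume_eq_prod, integral_prod_mul (fun t => exp (-t ^ 2 / 2)) (fun t => exp (-t ^ 2 / 2)),
    integral_exp_neg_sq_div_two,
    mul_self_sqrt (by positivity)]

theorem MeasurableEquiv.prodCongr_neg_refl_apply (z : ℝ × ℝ) :
    MeasurableEquiv.prodCongr (.neg ℝ) (.refl ℝ) z = (-z.1, z.2) :=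
  rfl

theorem measurePreserving_neg_fst :
    MeasurePreserving (MeasurableEquiv.prodCongr (.neg ℝ) (.refl ℝ)) (volume : Measure (ℝ × ℝ))
      volume :=
  (Measure.measurePreserving_neg volume).prod (MeasurePreserving.id volume)

/-- The Arnold–Castillo–Sarabia density (equation 12): for any `α`,
`∫ 2 φ₂(z; I₂) Φ(α z₁ z₂) dz = 1`. -/
theorem acs_density_integral
    (α : ℝ)
    (φ₂ : ℝ × ℝ → ℝ)
    (hφ₂ : ∀ z : ℝ × ℝ, φ₂ z =
      (2 * π)⁻¹ * Real.exp (-(z.1 ^ 2 + z.2 ^ 2) / 2))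
    (Φ : ℝ → ℝ)
    (hΦ : ∀ x, Φ x = ∫ t in Iic x, (Real.sqrt (2 * π))⁻¹ * Real.exp (-t ^ 2 / 2)) :
    ∫ z : ℝ × ℝ, 2 * φ₂ z * Φ (α * z.1 * z.2) = 1 := by
  set g : ℝ → ℝ := fun t => (√(2 * π))⁻¹ * exp (-t ^ 2 / 2)
  have hg : Integrable g := integrable_exp_neg_sq_div_two.const_mul _
  have hg_even : ∀ t, g (-t) = g t := fun t => by simp only [g, neg_sq]
  have hg_one : ∫ t, g t = 1 := by
    rw [integral_const_mul, integral_exp_neg_sq_div_two, inv_mul_cancel₀ (by positivity)]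
  rw [funext hφ₂, funext hΦ]
  refine integral_two_mul_mul_comp_eq_one_of_odd _ measurePreserving_neg_fst
    (integrable_exp_neg_sq_add_sq_div_two.const_mul _) ?_ (fun z => ?_) (by fun_prop)
    (fun z => ?_) (monotone_integral_Iic_of_nonneg hg fun t => by positivity).measurable
    (fun x => setIntegral_nonneg measurableSet_Iic fun t _ => by positivity) (fun x => ?_)
  · rw [integral_const_mul, integral_exp_neg_sq_add_sq_div_two, inv_mul_cancel₀ (by positivity)]
  · simp only [MeasurableEquiv.prodCongr_neg_refl_apply, neg_sq]
  · simp only [MeasurableEquiv.prodCongr_neg_refl_apply]; ring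
  · rw [integral_Iic_add_integral_Iic_neg_of_even hg hg_even, hg_one]
end
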